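/- Let (Ω, Σ, μ) be a finite measure space and X a Banach space such that (i) every RL-integrable function from Ω to X has a Bochner-integrable equivalent, and (ii) there is a countable family {x_n*} of continuous linear functionals on X separating the points of X (i.e., if x_n*(x) = 0 for all n then x = 0). Then every RL-integrable function f : Ω → X is Bochner-integrable. -/

import Mathlib

open MeasureTheory Set Pointwise

/-- A countable partition of `A` into pairwise disjoint measurable pieces
(possibly empty, so that finite partitions are included). -/
def IsRLPartition {Ω : Type*} [MeasurableSpace Ω] (A : Set Ω) (P : ℕ → Set Ω) : Prop :=
  (∀ i, MeasurableSet (P i)) ∧ Pairwise (Function.onFun Disjoint P) ∧ (⋃ i, P i) = A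

/-- `Γ` is finer than (inscribed into) `P`: every piece of `Γ` is contained in a piece of `P`. -/
def IsFinerPartition {Ω : Type*} (Γ P : ℕ → Set Ω) : Prop :=
  ∀ j, ∃ i, Γ j ⊆ P i

/-- `T` is a choice of sampling points for the partition `P`. -/
def IsSampling {Ω : Type*} (P : ℕ → Set Ω) (T : ℕ → Ω) : Prop :=
  ∀ i, (P i).Nonempty → T i ∈ P i

/-- The RL integral sum `S(f, P, T) = ∑ᵢ μ(Pᵢ) • f(Tᵢ)`. -/
noncomputable def RLSum {Ω X : Type*} [MeasurableSpace Ω] [NormedAddCommGroup X]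
    [NormedSpace ℝ X] (μ : Measure Ω) (f : Ω → X) (P : ℕ → Set Ω) (T : ℕ → Ω) : X :=
  ∑' i, (μ (P i)).toReal • f (T i)

/-- Absolute convergence of the RL integral sum. -/
def RLSumAbsConv {Ω X : Type*} [MeasurableSpace Ω] [NormedAddCommGroup X]
    (μ : Measure Ω) (f : Ω → X) (P : ℕ → Set Ω) (T : ℕ → Ω) : Prop :=
  Summable fun i => (μ (P i)).toReal * ‖f (T i)‖

/-- `f` is RL-integrable over `A` with RL integral `x`. -/
def HasRLIntegral {Ω X : Type*} [MeasurableSpace Ω] [NormedAddCommGroup X] [NormedSpace ℝ X]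
    (μ : Measure Ω) (f : Ω → X) (A : Set Ω) (x : X) : Prop :=
  ∀ ε > 0, ∃ P : ℕ → Set Ω, IsRLPartition A P ∧
    ∀ Γ : ℕ → Set Ω, IsRLPartition A Γ → IsFinerPartition Γ P →
      ∀ T : ℕ → Ω, IsSampling Γ T →
        RLSumAbsConv μ f Γ T ∧ ‖RLSum μ f Γ T - x‖ < ε

/-- `f` has a Lebesgue-integrable majorant, i.e. `f ∈ L̄₁(Ω, Σ, μ, X)`. -/
def HasIntegrableMajorant {Ω X : Type*} [MeasurableSpace Ω] [NormedAddCommGroup X]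
    (μ : Measure Ω) (f : Ω → X) : Prop :=
  ∃ g : Ω → ℝ, Integrable g μ ∧ ∀ t, ‖f t‖ ≤ g t

/-- The limit set `I(f)`: all limit points of the net of absolute RL integral sums. -/
def RLLimitSet {Ω X : Type*} [MeasurableSpace Ω] [NormedAddCommGroup X] [NormedSpace ℝ X]
    (μ : Measure Ω) (f : Ω → X) : Set X :=
  {x | ∀ ε > 0, ∀ P : ℕ → Set Ω, IsRLPartition Set.univ P →
    ∃ Γ : ℕ → Set Ω, IsRLPartition Set.univ Γ ∧ IsFinerPartition Γ P ∧
      ∃ T : ℕ → Ω, IsSampling Γ T ∧ RLSumAbsConv μ f Γ T ∧ ‖RLSum μ f Γ T - x‖ < ε}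

/-- `g` is a Bochner-integrable equivalent of `f`: `g` is Bochner integrable and the
RL integral of `f` over every measurable set equals the Bochner integral of `g` over it. -/
def BochnerEquivalent {Ω X : Type*} [MeasurableSpace Ω] [NormedAddCommGroup X] [NormedSpace ℝ X]
    (μ : Measure Ω) (f g : Ω → X) : Prop :=
  Integrable g μ ∧ ∀ A : Set Ω, MeasurableSet A → HasRLIntegral μ f A (∫ ω in A, g ω ∂μ)

/-- `f : [0,1] → X` is Riemann integrable with Riemann integral `x`. -/
def HasRiemannIntegral {X : Type*} [NormedAddCommGroup X] [NormedSpace ℝ X]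
    (f : ℝ → X) (x : X) : Prop :=
  ∀ ε > 0, ∃ δ > 0, ∀ (n : ℕ) (a : ℕ → ℝ) (t : ℕ → ℝ),
    a 0 = 0 → a n = 1 → (∀ i < n, a i ≤ a (i + 1)) →
    (∀ i < n, a (i + 1) - a i < δ) →
    (∀ i < n, t i ∈ Set.Icc (a i) (a (i + 1))) →
    ‖(∑ i ∈ Finset.range n, (a (i + 1) - a i) • f (t i)) - x‖ < ε

/-! For each `n`, the real function `φ n ∘ f` has RL integral `∫_A φ n ∘ g` over every measurable
`A`, where `g` is the Bochner-integrable equivalent of `f`. By the Saks–Henstock lemma, on a fine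
enough partition the RL sums of `φ n ∘ f` approximate the integrals of `φ n ∘ g` piece by piece,
with summable total error `≤ 6ε`. Refining further so that `φ n ∘ g` oscillates by at most `ε` on
each piece and sampling each piece inside `E = {c < |φ n ∘ f - φ n ∘ g|}` whenever possible gives
`c μ(E) ≤ (6 + μ(Ω)) ε`, so `φ n ∘ f = φ n ∘ g` almost everywhere. As the `φ n` are countably
many and separate points, `f = g` almost everywhere, hence `f` is Bochner integrable. -/

def interleave {α : Type*} (a b : ℕ → α) (n : ℕ) : α :=
  Sum.elim a b (Equiv.natSumNatEquivNat.symm n)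

lemma forall_interleave {α : Type*} {p : α → Prop} {a b : ℕ → α} (ha : ∀ i, p (a i))
    (hb : ∀ i, p (b i)) (n : ℕ) : p (interleave a b n) := by
  unfold interleave
  cases Equiv.natSumNatEquivNat.symm n
  exacts [ha _, hb _]

lemma interleave_map₂ {α β γ : Type*} (F : α → β → γ) (a b : ℕ → α) (c d : ℕ → β) :
    (fun n => F (interleave a b n) (interleave c d n)) =
      interleave (fun i => F (a i) (c i)) (fun i => F (b i) (d i)) := by
  funext n
  unfold interleave
  cases Equiv.natSumNatEquivNat.symm n <;> rfl

lemma tsum_interleave {E : Type*} [AddCommMonoid E] [TopologicalSpace E] [ContinuousAdd E]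
    [T2Space E] {a b : ℕ → E} (ha : Summable a) (hb : Summable b) :
    ∑' n, interleave a b n = ∑' n, a n + ∑' n, b n :=
  (Equiv.natSumNatEquivNat.symm.tsum_eq (Sum.elim a b)).trans (Summable.tsum_sum ha hb)

section Partitions

variable {Ω : Type*}

def partitionInter (P Q : ℕ → Set Ω) : ℕ → Set Ω :=
  fun n => P (Nat.unpair n).1 ∩ Q (Nat.unpair n).2

variable {A B : Set Ω} {P Q R : ℕ → Set Ω}

lemma IsFinerPartition.trans (hPQ : IsFinerPartition P Q) (hQR : IsFinerPartition Q R) :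
    IsFinerPartition P R := fun i =>
  let ⟨j, hj⟩ := hPQ i
  let ⟨k, hk⟩ := hQR j
  ⟨k, hj.trans hk⟩

lemma IsRLPartition.inter [MeasurableSpace Ω] (hP : IsRLPartition A P) (hQ : IsRLPartition B Q) :
    IsRLPartition (A ∩ B) (partitionInter P Q) := by
  refine ⟨fun n => (hP.1 _).inter (hQ.1 _), fun m n hmn => ?_, ?_⟩
  · have hne : Nat.unpair m ≠ Nat.unpair n := fun h => hmn (Nat.pairEquiv.symm.injective h)
    by_cases h1 : (Nat.unpair m).1 = (Nat.unpair n).1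
    · exact (hQ.2.1 fun h2 => hne (Prod.ext h1 h2)).mono inter_subset_right inter_subset_right
    · exact (hP.2.1 h1).mono inter_subset_left inter_subset_left
  · rw [← hP.2.2, ← hQ.2.2, iUnion_inter_iUnion, ← iUnion_prod' (fun p : ℕ × ℕ => P p.1 ∩ Q p.2)]
    exact Nat.surjective_unpair.iUnion_comp (fun p => P p.1 ∩ Q p.2)

lemma IsRLPartition.sdiff [MeasurableSpace Ω] (hP : IsRLPartition A P) (hB : MeasurableSet B) :
    IsRLPartition (A \ B) (fun i => P i \ B) :=
  ⟨fun i => (hP.1 i).diff hB, fun _ _ h => (hP.2.1 h).mono sdiff_subset sdiff_subset,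
    by rw [← iUnion_sdiff, hP.2.2]⟩

lemma isFinerPartition_partitionInter_left : IsFinerPartition (partitionInter P Q) P :=
  fun _ => ⟨_, inter_subset_left⟩

lemma isFinerPartition_partitionInter_right : IsFinerPartition (partitionInter P Q) Q :=
  fun _ => ⟨_, inter_subset_right⟩

lemma IsRLPartition.interleave [MeasurableSpace Ω] (hP : IsRLPartition A P) (hQ : IsRLPartition B Q)
    (hAB : Disjoint A B) : IsRLPartition (A ∪ B) (interleave P Q) := by
  have hdisj : Pairwise (Function.onFun Disjoint (Sum.elim P Q)) := by
    rintro (i | i) (j | j) hij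
    · exact hP.2.1 fun h => hij (congrArg _ h)
    · exact hAB.mono (hP.2.2 ▸ subset_iUnion P i) (hQ.2.2 ▸ subset_iUnion Q j)
    · exact hAB.symm.mono (hQ.2.2 ▸ subset_iUnion Q i) (hP.2.2 ▸ subset_iUnion P j)
    · exact hQ.2.1 fun h => hij (congrArg _ h)
  refine ⟨forall_interleave hP.1 hQ.1,
    hdisj.comp_of_injective Equiv.natSumNatEquivNat.symm.injective, ?_⟩
  rw [← hP.2.2, ← hQ.2.2, ← iUnion_sumElim]
  exact Equiv.natSumNatEquivNat.symm.surjective.iUnion_comp (Sum.elim P Q)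

lemma IsFinerPartition.interleave (hP : IsFinerPartition P R) (hQ : IsFinerPartition Q R) :
    IsFinerPartition (interleave P Q) R :=
  forall_interleave (p := fun s => ∃ i, s ⊆ R i) hP hQ

lemma IsSampling.interleave {S T : ℕ → Ω} (hS : IsSampling P S) (hT : IsSampling Q T) :
    IsSampling (interleave P Q) (interleave S T) := fun n => by
  unfold _root_.interleave
  cases Equiv.natSumNatEquivNat.symm n
  exacts [hS _, hT _]

lemma isRLPartition_preimage {β : Type*} [MeasurableSpace Ω] [MeasurableSpace β]
    [MeasurableSingletonClass β] (e : ℕ ≃ β) {k : Ω → β} (hk : Measurable k) :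
    IsRLPartition univ (fun n => k ⁻¹' {e n}) := by
  refine ⟨fun n => hk (measurableSet_singleton _), fun m n hmn => ?_, ?_⟩
  · exact (disjoint_singleton.2 fun h => hmn (e.injective h)).preimage k
  · rw [← preimage_iUnion, iUnion_singleton_eq_range, e.range_eq_univ, preimage_univ]

lemma exists_isRLPartition_abs_sub_le [MeasurableSpace Ω] {v : Ω → ℝ}
    (hv : Measurable v) {ε : ℝ} (hε : 0 < ε) :
    ∃ L : ℕ → Set Ω, IsRLPartition univ L ∧ ∀ i, ∀ s ∈ L i, ∀ t ∈ L i, |v s - v t| ≤ ε := by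
  refine ⟨_, isRLPartition_preimage Equiv.intEquivNat.symm (hv.div_const ε).floor,
    fun i s hs t ht => ?_⟩
  have h := Int.abs_sub_lt_one_of_floor_eq_floor (hs.trans ht.symm)
  rw [← sub_div, abs_div, abs_of_pos hε, div_lt_one hε] at h
  exact h.le

lemma exists_isSampling [Nonempty Ω] (P : ℕ → Set Ω) : ∃ T, IsSampling P T :=
  ⟨fun i => Classical.epsilon (· ∈ P i), fun _ hi => Classical.epsilon_spec hi⟩

lemma exists_isSampling_mem_of_nonempty_inter [Nonempty Ω] (P : ℕ → Set Ω) (E : Set Ω) :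
    ∃ T, IsSampling P T ∧ ∀ i, (P i ∩ E).Nonempty → T i ∈ E := by
  classical
  obtain ⟨T₀, hT₀⟩ := exists_isSampling P
  obtain ⟨T₁, hT₁⟩ := exists_isSampling fun i => P i ∩ E
  refine ⟨fun i => if (P i ∩ E).Nonempty then T₁ i else T₀ i, fun i hi => ?_,
    fun i hi => by simpa [hi] using (hT₁ i hi).2⟩
  dsimp only
  split_ifs with h
  exacts [(hT₁ i h).1, hT₀ i hi]

end Partitions

section RLSums

variable {Ω X : Type*} [MeasurableSpace Ω] [NormedAddCommGroup X] {μ : Measure Ω} {f : Ω → X}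
  {P Q : ℕ → Set Ω} {S T : ℕ → Ω}

lemma RLSumAbsConv.mono [IsFiniteMeasure μ] (h : RLSumAbsConv μ f P T) (hQP : ∀ i, Q i ⊆ P i) :
    RLSumAbsConv μ f Q T :=
  h.of_nonneg_of_le (fun _ => by positivity) fun i =>
    mul_le_mul_of_nonneg_right (measureReal_mono (hQP i)) (norm_nonneg _)

variable [NormedSpace ℝ X]

lemma RLSumAbsConv.summable [CompleteSpace X] (h : RLSumAbsConv μ f P T) :
    Summable fun i => (μ (P i)).toReal • f (T i) :=
  .of_norm <| h.congr fun i => by simp [norm_smul]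

lemma RLSum_eq_inter_add_sdiff [CompleteSpace X] [IsFiniteMeasure μ] {B : Set Ω}
    (hB : MeasurableSet B) (h : RLSumAbsConv μ f P T) :
    RLSum μ f P T = RLSum μ f (fun i => P i ∩ B) T + RLSum μ f (fun i => P i \ B) T := by
  rw [RLSum, RLSum, RLSum, ← Summable.tsum_add (h.mono fun _ => inter_subset_left).summable
    (h.mono fun _ => sdiff_subset).summable]
  exact tsum_congr fun i => by rw [← add_smul, ← measureReal_def, ← measureReal_def,
    ← measureReal_def, measureReal_inter_add_sdiff hB]

lemma RLSum_interleave [CompleteSpace X] (hPS : RLSumAbsConv μ f P S) (hQT : RLSumAbsConv μ f Q T) :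
    RLSum μ f (interleave P Q) (interleave S T) = RLSum μ f P S + RLSum μ f Q T := by
  rw [RLSum, interleave_map₂ (fun s t => (μ s).toReal • f t)]
  exact tsum_interleave hPS.summable hQT.summable

lemma RLSum_inter_biUnion (hP : Pairwise (Function.onFun Disjoint P)) (G : Finset ℕ) :
    RLSum μ f (fun i => P i ∩ ⋃ j ∈ G, P j) T = ∑ i ∈ G, (μ (P i)).toReal • f (T i) := by
  refine (tsum_eq_sum fun i hi => ?_).trans (Finset.sum_congr rfl fun i hi => ?_)
  · have hempty : P i ∩ ⋃ j ∈ G, P j = ∅ := disjoint_iff_inter_eq_empty.1 <|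
      disjoint_iUnion₂_right.2 fun j hj => hP fun h => hi (h ▸ hj)
    simp [hempty]
  · simp only [inter_eq_left.2 (Finset.subset_set_biUnion_of_mem (f := P) hi)]

variable {Y : Type*} [NormedAddCommGroup Y] [NormedSpace ℝ Y]

lemma ContinuousLinearMap.RLSum_comp [CompleteSpace X] (L : X →L[ℝ] Y) (h : RLSumAbsConv μ f P T) :
    RLSum μ (fun ω => L (f ω)) P T = L (RLSum μ f P T) := by
  simp only [RLSum, L.map_tsum h.summable, map_smul]

lemma ContinuousLinearMap.RLSumAbsConv_comp (L : X →L[ℝ] Y) (h : RLSumAbsConv μ f P T) :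
    RLSumAbsConv μ (fun ω => L (f ω)) P T :=
  (h.mul_left ‖L‖).of_nonneg_of_le (fun _ => by positivity) fun i => by
    rw [mul_left_comm]
    exact mul_le_mul_of_nonneg_left (L.le_opNorm _) ENNReal.toReal_nonneg

lemma ContinuousLinearMap.hasRLIntegral_comp [CompleteSpace X] (L : X →L[ℝ] Y) {A : Set Ω} {x : X}
    (h : HasRLIntegral μ f A x) : HasRLIntegral μ (fun ω => L (f ω)) A (L x) := by
  intro ε hε
  obtain ⟨P, hP, hPε⟩ := h (ε / (‖L‖ + 1)) (by positivity)
  refine ⟨P, hP, fun Γ hΓ hΓP T hT => ?_⟩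
  obtain ⟨habs, hlt⟩ := hPε Γ hΓ hΓP T hT
  refine ⟨L.RLSumAbsConv_comp habs, ?_⟩
  rw [L.RLSum_comp habs, ← map_sub]
  calc ‖L (RLSum μ f Γ T - x)‖ ≤ ‖L‖ * ‖RLSum μ f Γ T - x‖ := L.le_opNorm _
    _ ≤ ‖L‖ * (ε / (‖L‖ + 1)) := by gcongr
    _ < ε := by
      rw [mul_div_assoc', div_lt_iff₀ (by positivity)]
      linarith

end RLSums

section Measures

variable {Ω : Type*} [MeasurableSpace Ω] {μ : Measure Ω} [IsFiniteMeasure μ] {A : Set Ω}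
  {P : ℕ → Set Ω}

lemma IsRLPartition.hasSum_measure_toReal (hP : IsRLPartition A P) :
    HasSum (fun i => (μ (P i)).toReal) (μ A).toReal := by
  rw [← hP.2.2, measure_iUnion hP.2.1 hP.1, ENNReal.tsum_toReal_eq fun _ => measure_ne_top μ _]
  exact (ENNReal.summable_toReal <| by
    rw [← measure_iUnion hP.2.1 hP.1]; exact measure_ne_top μ _).hasSum

lemma IsRLPartition.measure_toReal_le_tsum_inter (hP : IsRLPartition A P) {E : Set Ω}
    (hE : E ⊆ A) :
    Summable (fun i => (μ (P i ∩ E)).toReal) ∧ (μ E).toReal ≤ ∑' i, (μ (P i ∩ E)).toReal := by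
  have hfin : ∑' i, μ (P i ∩ E) ≠ ⊤ := by
    refine ne_top_of_le_ne_top (measure_ne_top μ A) ?_
    rw [← hP.2.2, measure_iUnion hP.2.1 hP.1]
    exact ENNReal.tsum_le_tsum fun i => measure_mono inter_subset_left
  refine ⟨ENNReal.summable_toReal hfin, ?_⟩
  rw [← ENNReal.tsum_toReal_eq fun _ => measure_ne_top μ _]
  refine ENNReal.toReal_mono hfin ?_
  calc μ E = μ (⋃ i, P i ∩ E) := by rw [← iUnion_inter, hP.2.2, inter_eq_right.2 hE]
    _ ≤ ∑' i, μ (P i ∩ E) := measure_iUnion_le _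

lemma abs_measure_toReal_mul_sub_setIntegral_le {v : Ω → ℝ} (hv : Integrable v μ) (S : Set Ω)
    {c ε : ℝ} (hc : ∀ s ∈ S, |c - v s| ≤ ε) :
    |(μ S).toReal * c - ∫ ω in S, v ω ∂μ| ≤ ε * (μ S).toReal := by
  have h := norm_setIntegral_le_of_norm_le_const (measure_lt_top μ S) (f := fun s => c - v s) hc
  rwa [integral_sub (integrable_const c) hv.integrableOn, setIntegral_const] at h

end Measures

lemma sum_abs_le_two_mul_of_forall_abs_sum_le {ι : Type*} {b : ι → ℝ} {C : ℝ}
    (h : ∀ G : Finset ι, |∑ i ∈ G, b i| ≤ C) (G : Finset ι) : ∑ i ∈ G, |b i| ≤ 2 * C := by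
  classical
  rw [← Finset.sum_filter_add_sum_filter_not G (fun i => 0 ≤ b i)]
  have hpos : ∑ i ∈ G with 0 ≤ b i, |b i| = ∑ i ∈ G with 0 ≤ b i, b i :=
    Finset.sum_congr rfl fun i hi => abs_of_nonneg (Finset.mem_filter.1 hi).2
  have hneg : ∑ i ∈ G with ¬0 ≤ b i, |b i| = -∑ i ∈ G with ¬0 ≤ b i, b i := by
    rw [← Finset.sum_neg_distrib]
    exact Finset.sum_congr rfl fun i hi => abs_of_neg (not_le.1 (Finset.mem_filter.1 hi).2)
  rw [hpos, hneg]
  linarith [le_abs_self (∑ i ∈ G with 0 ≤ b i, b i), neg_abs_le (∑ i ∈ G with ¬0 ≤ b i, b i),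
    h (G.filter fun i => 0 ≤ b i), h (G.filter fun i => ¬0 ≤ b i)]

lemma summable_abs_and_tsum_le_of_forall_abs_sum_le {ι : Type*} {b : ι → ℝ} {C : ℝ}
    (h : ∀ G : Finset ι, |∑ i ∈ G, b i| ≤ C) :
    Summable (fun i => |b i|) ∧ ∑' i, |b i| ≤ 2 * C :=
  ⟨summable_of_sum_le (fun _ => abs_nonneg _) (sum_abs_le_two_mul_of_forall_abs_sum_le h),
    Real.tsum_le_of_sum_le (fun _ => abs_nonneg _) (sum_abs_le_two_mul_of_forall_abs_sum_le h)⟩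

section ScalarFunctions

variable {Ω : Type*} [MeasurableSpace Ω] {μ : Measure Ω} [IsFiniteMeasure μ] {u v : Ω → ℝ}

-- The Saks–Henstock lemma.
theorem exists_partition_abs_sum_sub_setIntegral_le (hv : Integrable v μ)
    (hu : ∀ A, MeasurableSet A → HasRLIntegral μ u A (∫ ω in A, v ω ∂μ)) {ε : ℝ} (hε : 0 < ε) :
    ∃ P, IsRLPartition univ P ∧ ∀ Γ, IsRLPartition univ Γ → IsFinerPartition Γ P →
      ∀ T, IsSampling Γ T → ∀ G : Finset ℕ,
        |∑ i ∈ G, ((μ (Γ i)).toReal * u (T i) - ∫ ω in Γ i, v ω ∂μ)| ≤ 3 * ε := by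
  obtain ⟨P, hP, hPε⟩ := hu univ MeasurableSet.univ ε hε
  refine ⟨P, hP, fun Γ hΓ hΓP T hT G => ?_⟩
  have : Nonempty Ω := ⟨T 0⟩
  set B := ⋃ i ∈ G, Γ i
  have hB : MeasurableSet B := G.measurableSet_biUnion fun i _ => hΓ.1 i
  obtain ⟨Q, hQ, hQε⟩ := hu B hB ε hε
  have hΓin : IsRLPartition B (partitionInter Γ Q) := by simpa using hΓ.inter hQ
  obtain ⟨Tin, hTin⟩ := exists_isSampling (partitionInter Γ Q)
  have hΓout : IsRLPartition Bᶜ (fun i => Γ i \ B) := by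
    simpa [compl_eq_univ_sdiff] using hΓ.sdiff hB
  have hTout : IsSampling (fun i => Γ i \ B) T := by
    rintro i ⟨t, htΓ, htB⟩
    have hi : i ∉ G := fun hi => htB (mem_biUnion hi htΓ)
    refine ⟨hT i ⟨t, htΓ⟩, fun hTB => ?_⟩
    obtain ⟨j, hj, hTj⟩ := mem_iUnion₂.1 hTB
    exact disjoint_left.1 (hΓ.2.1 (by rintro rfl; exact hi hj)) (hT i ⟨t, htΓ⟩) hTj
  -- `Γ'` is `Γ` off `B` and `Γ` refined along `Q` on `B`; its RL sum, compared with those of `Γ`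
  -- and of its part inside `B`, isolates the pieces indexed by `G`.
  have hΓ' : IsRLPartition univ (interleave (fun i => Γ i \ B) (partitionInter Γ Q)) := by
    simpa using hΓout.interleave hΓin disjoint_compl_left
  have hΓ'P : IsFinerPartition (interleave (fun i => Γ i \ B) (partitionInter Γ Q)) P :=
    (IsFinerPartition.interleave (fun i => ⟨i, sdiff_subset⟩)
      isFinerPartition_partitionInter_left).trans hΓP
  obtain ⟨habs, hS⟩ := hPε Γ hΓ hΓP T hT
  obtain ⟨-, hS'⟩ := hPε _ hΓ' hΓ'P _ (hTout.interleave hTin)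
  obtain ⟨habsin, hSin⟩ := hQε _ hΓin isFinerPartition_partitionInter_right Tin hTin
  have hsplit : RLSum μ u Γ T =
      ∑ i ∈ G, (μ (Γ i)).toReal • u (T i) + RLSum μ u (fun i => Γ i \ B) T := by
    rw [← RLSum_inter_biUnion hΓ.2.1 G]
    exact RLSum_eq_inter_add_sdiff hB habs
  have hsplit' := RLSum_interleave (habs.mono fun i => sdiff_subset (t := B)) habsin
  have hint : ∫ ω in B, v ω ∂μ = ∑ i ∈ G, ∫ ω in Γ i, v ω ∂μ :=
    integral_biUnion_finset G (fun i _ => hΓ.1 i) (hΓ.2.1.set_pairwise _)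
      fun i _ => hv.integrableOn
  simp only [smul_eq_mul] at hsplit
  rw [Real.norm_eq_abs, abs_lt] at hS hS' hSin
  rw [Finset.sum_sub_distrib, ← hint, abs_le]
  constructor <;> linarith

theorem mul_measure_lt_abs_sub_le [Nonempty Ω] (hv : Integrable v μ) (hvm : Measurable v)
    (hu : ∀ A, MeasurableSet A → HasRLIntegral μ u A (∫ ω in A, v ω ∂μ)) {c : ℝ} (hc : 0 ≤ c)
    {ε : ℝ} (hε : 0 < ε) :
    c * (μ {t | c < |u t - v t|}).toReal ≤ (6 + (μ univ).toReal) * ε := by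
  set E := {t | c < |u t - v t|}
  obtain ⟨P, hP, hPG⟩ := exists_partition_abs_sum_sub_setIntegral_le hv hu hε
  obtain ⟨L, hL, hLosc⟩ := exists_isRLPartition_abs_sub_le hvm hε
  have hR : IsRLPartition univ (partitionInter P L) := by simpa using hP.inter hL
  set R := partitionInter P L
  -- `E` need not be measurable: sampling inside it where possible controls its outer measure.
  obtain ⟨T, hT, hTE⟩ := exists_isSampling_mem_of_nonempty_inter R E
  set b := fun i => (μ (R i)).toReal * u (T i) - ∫ ω in R i, v ω ∂μ
  obtain ⟨hbs, hb⟩ := summable_abs_and_tsum_le_of_forall_abs_sum_le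
    (hPG R hR isFinerPartition_partitionInter_left T hT)
  have hosc (i : ℕ) :
      |(μ (R i)).toReal * v (T i) - ∫ ω in R i, v ω ∂μ| ≤ ε * (μ (R i)).toReal :=
    abs_measure_toReal_mul_sub_setIntegral_le hv (R i) fun s hs =>
      hLosc _ _ (hT i ⟨s, hs⟩).2 _ hs.2
  have hpt (i : ℕ) : c * (μ (R i ∩ E)).toReal ≤ |b i| + ε * (μ (R i)).toReal := by
    rcases (R i ∩ E).eq_empty_or_nonempty with h | h
    · rw [h, measure_empty, ENNReal.toReal_zero, mul_zero]
      positivity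
    calc c * (μ (R i ∩ E)).toReal ≤ c * (μ (R i)).toReal :=
          mul_le_mul_of_nonneg_left (measureReal_mono (μ := μ) inter_subset_left) hc
      _ ≤ (μ (R i)).toReal * |u (T i) - v (T i)| := by
          rw [mul_comm]
          gcongr
          exact (hTE i h).le
      _ = |b i - ((μ (R i)).toReal * v (T i) - ∫ ω in R i, v ω ∂μ)| := by
          rw [show b i - _ = (μ (R i)).toReal * (u (T i) - v (T i)) by simp only [b]; ring,
            abs_mul, abs_of_nonneg ENNReal.toReal_nonneg]
      _ ≤ |b i| + ε * (μ (R i)).toReal := (abs_sub _ _).trans (by gcongr; exact hosc i)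
  obtain ⟨hEs, hE⟩ := hR.measure_toReal_le_tsum_inter (μ := μ) (subset_univ E)
  have hμR := (hR.hasSum_measure_toReal (μ := μ)).mul_left ε
  calc c * (μ E).toReal ≤ ∑' i, c * (μ (R i ∩ E)).toReal := by
        rw [tsum_mul_left]
        gcongr
    _ ≤ ∑' i, (|b i| + ε * (μ (R i)).toReal) :=
        (hEs.mul_left c).tsum_le_tsum hpt (hbs.add hμR.summable)
    _ = ∑' i, |b i| + ε * (μ univ).toReal := by rw [hbs.tsum_add hμR.summable, hμR.tsum_eq]
    _ ≤ 2 * (3 * ε) + ε * (μ univ).toReal := by gcongr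
    _ = (6 + (μ univ).toReal) * ε := by ring

theorem ae_eq_of_forall_hasRLIntegral_setIntegral (hv : Integrable v μ)
    (hu : ∀ A, MeasurableSet A → HasRLIntegral μ u A (∫ ω in A, v ω ∂μ)) : u =ᵐ[μ] v := by
  rcases isEmpty_or_nonempty Ω with hΩ | hΩ
  · exact .of_forall fun ω => isEmptyElim ω
  obtain ⟨w, hwm, hvw⟩ := hv.aemeasurable
  refine Filter.EventuallyEq.trans ?_ hvw.symm
  have hw : Integrable w μ := hv.congr hvw
  have huw (A : Set Ω) (hA : MeasurableSet A) : HasRLIntegral μ u A (∫ ω in A, w ω ∂μ) := by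
    rw [← integral_congr_ae (ae_restrict_of_ae hvw)]
    exact hu A hA
  have hnull (c : ℝ) (hc : 0 < c) : μ {t | c < |u t - w t|} = 0 := by
    have hK : 0 < 6 + (μ univ).toReal := by positivity
    have hle : c * (μ {t | c < |u t - w t|}).toReal ≤ 0 := le_of_forall_pos_le_add fun δ hδ => by
      simpa [mul_div_cancel₀ _ hK.ne'] using
        mul_measure_lt_abs_sub_le hw hwm huw hc.le (div_pos hδ hK)
    exact (measureReal_eq_zero_iff).1 <|
      le_antisymm (nonpos_of_mul_nonpos_right hle hc) measureReal_nonneg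
  rw [Filter.EventuallyEq, ae_iff]
  refine measure_mono_null (fun t ht => ?_) <|
    measure_iUnion_null fun n : ℕ => hnull (1 / (n + 1)) Nat.one_div_pos_of_nat
  obtain ⟨n, hn⟩ := exists_nat_one_div_lt (abs_pos.2 (sub_ne_zero.2 ht))
  exact mem_iUnion.2 ⟨n, hn⟩

end ScalarFunctions

/-- If every RL-integrable `X`-valued function on `Ω` has a Bochner-integrable
equivalent and `X` admits a countable family of continuous linear functionals separating
points, then every RL-integrable function `f : Ω → X` is Bochner-integrable. -/
theorem bochner_integrable_of_RL_integrable
    {Ω X : Type*} [MeasurableSpace Ω] [NormedAddCommGroup X] [NormedSpace ℝ X] [CompleteSpace X]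
    (μ : Measure Ω) [IsFiniteMeasure μ]
    (hequiv : ∀ h : Ω → X, (∃ x, HasRLIntegral μ h Set.univ x) →
      ∃ g : Ω → X, BochnerEquivalent μ h g)
    (φ : ℕ → X →L[ℝ] ℝ) (hsep : ∀ x : X, (∀ n, φ n x = 0) → x = 0)
    (f : Ω → X) (hf : ∃ x, HasRLIntegral μ f Set.univ x) :
    Integrable f μ := by
  obtain ⟨g, hg, hfg⟩ := hequiv f hf
  have hφ (n : ℕ) : (fun ω => φ n (f ω)) =ᵐ[μ] fun ω => φ n (g ω) :=
    ae_eq_of_forall_hasRLIntegral_setIntegral ((φ n).integrable_comp hg) fun A hA => by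
      rw [(φ n).integral_comp_comm hg.integrableOn]
      exact (φ n).hasRLIntegral_comp (hfg A hA)
  refine hg.congr ?_
  filter_upwards [ae_all_iff.2 hφ] with ω hω
  exact (sub_eq_zero.1 (hsep _ fun n => by rw [map_sub, hω n, sub_self])).symm
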